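/- Let d > 1. The function a ↦ w₊(a) := (-2a²d + u₊(a) + 2a√(d²(1+a²) - d·u₊(a)))/(1 - a²), where u₊(a) = √(4a²d² + (1-a²)²), is strictly increasing on [0,1), with w₊(0) = 1; consequently w₊(a) > 1 for all 0 < a < 1. -/

import Mathlib

/-!
Write `x = a²`, `K = 4d(d² - 1) > 0` and `t₊(x) = x / (d(1 + x) + u₊)`. Rationalising with the
conjugate identity `(d(1 + x) - u₊)(d(1 + x) + u₊) = (d² - 1)(1 - x)²` shows that the two summands
of the numerator of `w₊`, divided by `1 - a²`, are `√(1 + K t₊)` and `√(K t₊)`, so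
`w₊ = √(1 + K t₊) + √(K t₊)`. It remains to see that `t₊` is strictly increasing in `x ∈ [0, 1]`,
which after cross-multiplying reduces to `x u₊(y) ≤ y u₊(x)` for `x ≤ y`; squared, this is
polynomial.
-/

open Real Set

noncomputable section

/-- `u₊` as a function of `x = a²`. -/
def uPlus (d x : ℝ) : ℝ := √(4 * x * d ^ 2 + (1 - x) ^ 2)

def tPlus (d x : ℝ) : ℝ := x / (d * (1 + x) + uPlus d x)

def wPlus (d a : ℝ) : ℝ :=
  (-2 * a ^ 2 * d + uPlus d (a ^ 2) +
    2 * a * √(d ^ 2 * (1 + a ^ 2) - d * uPlus d (a ^ 2))) / (1 - a ^ 2)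

end

section

variable {d x y a : ℝ}

lemma sq_uPlus (hx : 0 ≤ x) : uPlus d x ^ 2 = 4 * x * d ^ 2 + (1 - x) ^ 2 :=
  sq_sqrt (by positivity)

lemma two_mul_mul_le_uPlus (hx0 : 0 ≤ x) (hx1 : x ≤ 1) : 2 * x * d ≤ uPlus d x :=
  le_sqrt_of_sq_le (by nlinarith [mul_nonneg (mul_nonneg hx0 (sq_nonneg d)) (sub_nonneg.2 hx1)])

lemma uPlus_le (hd : 1 ≤ d) (hx : 0 ≤ x) : uPlus d x ≤ d * (1 + x) :=
  sqrt_le_iff.2 ⟨by positivity, by nlinarith [mul_nonneg (sub_nonneg.2 hd) (sq_nonneg (1 - x))]⟩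

lemma mul_sub_uPlus_mul_add_uPlus (hx : 0 ≤ x) :
    (d * (1 + x) - uPlus d x) * (d * (1 + x) + uPlus d x) = (d ^ 2 - 1) * (1 - x) ^ 2 := by
  linear_combination -sq_uPlus (d := d) hx

lemma add_uPlus_pos (hd : 0 < d) (hx : 0 ≤ x) : 0 < d * (1 + x) + uPlus d x := by
  unfold uPlus
  positivity

lemma tPlus_nonneg (hd : 0 < d) (hx : 0 ≤ x) : 0 ≤ tPlus d x :=
  div_nonneg hx (add_uPlus_pos hd hx).le

lemma mul_uPlus_le_mul_uPlus (hx : 0 ≤ x) (hxy : x ≤ y) (hy : y ≤ 1) :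
    x * uPlus d y ≤ y * uPlus d x := by
  have hsq : (x * uPlus d y) ^ 2 ≤ (y * uPlus d x) ^ 2 := by
    rw [mul_pow, mul_pow, sq_uPlus (hx.trans hxy), sq_uPlus hx]
    have hlin : x * (1 - y) ≤ y * (1 - x) := by nlinarith
    nlinarith [mul_self_le_mul_self (mul_nonneg hx (sub_nonneg.2 hy)) hlin,
      mul_nonneg (mul_nonneg (mul_nonneg hx (hx.trans hxy)) (sq_nonneg d)) (sub_nonneg.2 hxy)]
  exact le_of_pow_le_pow_left₀ two_ne_zero
    (mul_nonneg (hx.trans hxy) (sqrt_nonneg _)) hsq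

lemma tPlus_strictMonoOn (hd : 0 < d) : StrictMonoOn (tPlus d) (Icc 0 1) := by
  intro x ⟨hx0, _⟩ y ⟨hy0, hy1⟩ hxy
  rw [tPlus, tPlus, div_lt_div_iff₀ (add_uPlus_pos hd hx0) (add_uPlus_pos hd hy0)]
  nlinarith [mul_uPlus_le_mul_uPlus (d := d) hx0 hxy.le hy1, mul_lt_mul_of_pos_right hxy hd]

lemma wPlus_eq_sqrt_add_sqrt (hd : 1 ≤ d) (ha0 : 0 ≤ a) (ha1 : a < 1) :
    wPlus d a = √(1 + 4 * d * (d ^ 2 - 1) * tPlus d (a ^ 2)) +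
      √(4 * d * (d ^ 2 - 1) * tPlus d (a ^ 2)) := by
  have hx0 : 0 ≤ a ^ 2 := sq_nonneg a
  have hx1 : a ^ 2 < 1 := by nlinarith
  have hU2 := sq_uPlus (d := d) hx0
  have hconj := mul_sub_uPlus_mul_add_uPlus (d := d) hx0
  have hD := add_uPlus_pos (d := d) (by linarith) hx0
  have hW2 : √(d ^ 2 * (1 + a ^ 2) - d * uPlus d (a ^ 2)) ^ 2 =
      d ^ 2 * (1 + a ^ 2) - d * uPlus d (a ^ 2) :=
    sq_sqrt (by nlinarith [uPlus_le hd hx0])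
  have hsub : 0 < 1 - a ^ 2 := by linarith
  have hfirst : √(1 + 4 * d * (d ^ 2 - 1) * tPlus d (a ^ 2)) =
      (-2 * a ^ 2 * d + uPlus d (a ^ 2)) / (1 - a ^ 2) := by
    have hsq : 1 + 4 * d * (d ^ 2 - 1) * tPlus d (a ^ 2) =
        ((-2 * a ^ 2 * d + uPlus d (a ^ 2)) / (1 - a ^ 2)) ^ 2 := by
      rw [tPlus]
      field_simp
      linear_combination (-(d * (1 + a ^ 2) + uPlus d (a ^ 2))) * hU2 - 4 * a ^ 2 * d * hconj
    rw [hsq, sqrt_sq (div_nonneg (by linarith [two_mul_mul_le_uPlus (d := d) hx0 hx1.le])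
      hsub.le)]
  have hsecond : √(4 * d * (d ^ 2 - 1) * tPlus d (a ^ 2)) =
      2 * a * √(d ^ 2 * (1 + a ^ 2) - d * uPlus d (a ^ 2)) / (1 - a ^ 2) := by
    set W := √(d ^ 2 * (1 + a ^ 2) - d * uPlus d (a ^ 2))
    have hsq : 4 * d * (d ^ 2 - 1) * tPlus d (a ^ 2) = (2 * a * W / (1 - a ^ 2)) ^ 2 := by
      rw [tPlus]
      field_simp
      linear_combination (-4 * a ^ 2 * (d * (1 + a ^ 2) + uPlus d (a ^ 2))) * hW2
        - 4 * a ^ 2 * d * hconj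
    rw [hsq, sqrt_sq (by positivity)]
  rw [hfirst, hsecond, wPlus, add_div, add_div]

lemma wPlus_strictMonoOn (hd : 1 < d) : StrictMonoOn (wPlus d) (Ico 0 1) := by
  intro a ⟨ha0, ha1⟩ b ⟨hb0, hb1⟩ hab
  have hK : 0 < 4 * d * (d ^ 2 - 1) := by nlinarith
  have ht : tPlus d (a ^ 2) < tPlus d (b ^ 2) :=
    tPlus_strictMonoOn (by linarith) ⟨sq_nonneg a, by nlinarith⟩ ⟨sq_nonneg b, by nlinarith⟩
      (pow_lt_pow_left₀ hab ha0 two_ne_zero)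
  have hKt : 0 ≤ 4 * d * (d ^ 2 - 1) * tPlus d (a ^ 2) :=
    mul_nonneg hK.le (tPlus_nonneg (by linarith) (sq_nonneg a))
  rw [wPlus_eq_sqrt_add_sqrt hd.le ha0 ha1, wPlus_eq_sqrt_add_sqrt hd.le hb0 hb1]
  gcongr

end

theorem stmt7 (d : ℝ) (hd : 1 < d) :
    let u : ℝ → ℝ := fun a => Real.sqrt (4 * a ^ 2 * d ^ 2 + (1 - a ^ 2) ^ 2)
    let wp : ℝ → ℝ := fun a =>
      (-2 * a ^ 2 * d + u a + 2 * a * Real.sqrt (d ^ 2 * (1 + a ^ 2) - d * u a)) / (1 - a ^ 2)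
    StrictMonoOn wp (Set.Ico (0 : ℝ) 1) ∧ wp 0 = 1 ∧
    ∀ a : ℝ, 0 < a → a < 1 → 1 < wp a := by
  intro u wp
  have hwp : wp = wPlus d := rfl
  have hmono : StrictMonoOn wp (Ico 0 1) := hwp ▸ wPlus_strictMonoOn hd
  have hwp0 : wp 0 = 1 := by norm_num [hwp, wPlus, uPlus]
  refine ⟨hmono, hwp0, fun a ha0 ha1 => ?_⟩
  simpa [hwp0] using hmono ⟨le_rfl, one_pos⟩ ⟨ha0.le, ha1⟩ ha0
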